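/- Let F be a finitely generated free 2-parameter persistence module, K ≤ F a submodule with quotient M = F/K. For each α ∈ ℕ², with I_α = φ_{α+e₁}^{α+e₁+e₂}(K_{α+e₁}) ∩ φ_{α+e₂}^{α+e₁+e₂}(K_{α+e₂}) ⊆ F_{α+e₁+e₂}, one has dim(I_α) = dim(K_α) + z_α, where z_α = dim{w ∈ M_α : the induced maps M_α → M_{α+e₁} and M_α → M_{α+e₂} both send w to 0}. -/
import Mathlib


/-- The free 2-parameter persistence module on a finite (multi)set of generators,
indexed by `ι` with degrees `deg`: at grade `α` it is the direct sum of one copy of `F`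
for each generator `i` with `deg i ≤ α` (product order on `ℕ × ℕ`). -/
abbrev FreeMod (F : Type*) [Field F] (ι : Type*) (deg : ι → ℕ × ℕ) (α : ℕ × ℕ) : Type _ :=
  {i : ι // deg i ≤ α} → F

/-- Structure map of the free module: identity on each summand present at the source,
new summands get `0`. -/
def freeMap (F : Type*) [Field F] (ι : Type*) (deg : ι → ℕ × ℕ) (α β : ℕ × ℕ)
    (_h : α ≤ β) : FreeMod F ι deg α →ₗ[F] FreeMod F ι deg β where
  toFun f i := if h' : deg i.1 ≤ α then f ⟨i.1, h'⟩ else 0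
  map_add' f g := by funext i; by_cases h' : deg i.1 ≤ α <;> simp [h']
  map_smul' c f := by funext i; by_cases h' : deg i.1 ≤ α <;> simp [h']

lemma le_add_e1 (α : ℕ × ℕ) : α ≤ α + (1, 0) := by simp [Prod.le_def]

lemma le_add_e2 (α : ℕ × ℕ) : α ≤ α + (0, 1) := by simp [Prod.le_def]

lemma add_e1_le (α : ℕ × ℕ) : α + (1, 0) ≤ α + (1, 1) := by simp [Prod.le_def]

lemma add_e2_le (α : ℕ × ℕ) : α + (0, 1) ≤ α + (1, 1) := by simp [Prod.le_def]

def resMap (F : Type*) [Field F] (ι : Type*) (deg : ι → ℕ × ℕ) (α β : ℕ × ℕ)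
    (h : α ≤ β) : FreeMod F ι deg β →ₗ[F] FreeMod F ι deg α where
  toFun f i := f ⟨i.1, i.2.trans h⟩
  map_add' f g := rfl
  map_smul' c f := rfl

lemma res_free {F : Type*} [Field F] {ι : Type*} {deg : ι → ℕ × ℕ} {α β : ℕ × ℕ}
    (h : α ≤ β) (x : FreeMod F ι deg α) :
    resMap F ι deg α β h (freeMap F ι deg α β h x) = x := by
  funext i
  simp [resMap, freeMap, i.2]

lemma free_inj {F : Type*} [Field F] {ι : Type*} {deg : ι → ℕ × ℕ} {α β : ℕ × ℕ}
    (h : α ≤ β) : Function.Injective (freeMap F ι deg α β h) :=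
  Function.LeftInverse.injective (g := resMap F ι deg α β h) (res_free h)

lemma free_comp {F : Type*} [Field F] {ι : Type*} {deg : ι → ℕ × ℕ} {α β γ : ℕ × ℕ}
    (h1 : α ≤ β) (h2 : β ≤ γ) (x : FreeMod F ι deg α) :
    freeMap F ι deg β γ h2 (freeMap F ι deg α β h1 x) =
      freeMap F ι deg α γ (h1.trans h2) x := by
  funext i
  by_cases hb : deg i.1 ≤ β
  · by_cases ha : deg i.1 ≤ α <;> simp [freeMap, hb, ha]
  · have ha : ¬ deg i.1 ≤ α := fun ha => hb (ha.trans h1)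
    simp [freeMap, hb, ha]

set_option synthInstance.maxHeartbeats 1000000 in
set_option maxHeartbeats 1000000 in
/-- For a submodule `K` of a finitely generated free 2-parameter
persistence module `F`, with quotient `M = F/K`, and
`I_α = φ_{α+e₁}^{α+e₁+e₂}(K_{α+e₁}) ∩ φ_{α+e₂}^{α+e₁+e₂}(K_{α+e₂}) ⊆ F_{α+e₁+e₂}`,
one has `dim I_α = dim K_α + z_α`, where `z_α` is the dimension of the subspace of
`M_α = F_α/K_α` killed by both induced structure maps `M_α → M_{α+eᵢ}`. -/
theorem dim_intersection_eq (F : Type*) [Field F] (ι : Type*) [Fintype ι]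
    (deg : ι → ℕ × ℕ)
    (K : ∀ α : ℕ × ℕ, Submodule F (FreeMod F ι deg α))
    (hK : ∀ (α β : ℕ × ℕ) (h : α ≤ β), (K α).map (freeMap F ι deg α β h) ≤ K β)
    (α : ℕ × ℕ) :
    Module.finrank F
        ↥((K (α + (1, 0))).map
              (freeMap F ι deg (α + (1, 0)) (α + (1, 1)) (add_e1_le α)) ⊓
            (K (α + (0, 1))).map
              (freeMap F ι deg (α + (0, 1)) (α + (1, 1)) (add_e2_le α))) =
      Module.finrank F ↥(K α) +
        Module.finrank F
          ↥(LinearMap.ker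
              (Submodule.mapQ (K α) (K (α + (1, 0)))
                (freeMap F ι deg α (α + (1, 0)) (le_add_e1 α))
                (Submodule.map_le_iff_le_comap.mp (hK _ _ _))) ⊓
            LinearMap.ker
              (Submodule.mapQ (K α) (K (α + (0, 1)))
                (freeMap F ι deg α (α + (0, 1)) (le_add_e2 α))
                (Submodule.map_le_iff_le_comap.mp (hK _ _ _)))) := by
  classical
  set β1 := α + (1, 0)
  set β2 := α + (0, 1)
  set γ := α + (1, 1)
  have hγ : α ≤ γ := (le_add_e1 α).trans (add_e1_le α)
  set φ := freeMap F ι deg α γ hγ with hφ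
  set r := resMap F ι deg α γ hγ with hr
  set I := (K β1).map (freeMap F ι deg β1 γ (add_e1_le α)) ⊓
      (K β2).map (freeMap F ι deg β2 γ (add_e2_le α)) with hI
  set Z := LinearMap.ker
        (Submodule.mapQ (K α) (K β1) (freeMap F ι deg α β1 (le_add_e1 α))
          (Submodule.map_le_iff_le_comap.mp (hK _ _ _))) ⊓
      LinearMap.ker
        (Submodule.mapQ (K α) (K β2) (freeMap F ι deg α β2 (le_add_e2 α))
          (Submodule.map_le_iff_le_comap.mp (hK _ _ _))) with hZ
  -- key representation: every element of I is φ of its restriction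
  have hrep : ∀ v ∈ I, φ (r v) = v := by
    intro v hv
    obtain ⟨⟨k1, hk1, e1⟩, ⟨k2, hk2, e2⟩⟩ := hv
    funext i
    by_cases hi : deg i.1 ≤ α
    · simp [hφ, hr, freeMap, resMap, hi]
    · have hor : ¬ deg i.1 ≤ β1 ∨ ¬ deg i.1 ≤ β2 := by
        rcases i with ⟨i, hiγ⟩
        simp only [Prod.le_def, β1, β2, γ, Prod.fst_add, Prod.snd_add] at *
        omega
      rcases hor with h | h
      · rw [← e1]; simp [hφ, hr, freeMap, hi, h]
      · rw [← e2]; simp [hφ, hr, freeMap, hi, h]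
  -- φ maps K α into I
  have hφK : ∀ x ∈ K α, φ x ∈ I := by
    intro x hx
    refine Submodule.mem_inf.mpr ⟨?_, ?_⟩
    · exact ⟨freeMap F ι deg α β1 (le_add_e1 α) x,
        hK α β1 (le_add_e1 α) ⟨x, hx, rfl⟩, free_comp _ _ x⟩
    · exact ⟨freeMap F ι deg α β2 (le_add_e2 α) x,
        hK α β2 (le_add_e2 α) ⟨x, hx, rfl⟩, free_comp _ _ x⟩
  set ψ : ↥I →ₗ[F] (FreeMod F ι deg α ⧸ K α) :=
    (K α).mkQ ∘ₗ r ∘ₗ I.subtype with hψ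
  -- the kernel of ψ is isomorphic to K α
  have hgmem : ∀ k : ↥(K α), (φ ∘ₗ (K α).subtype) k ∈ I := fun k => hφK k.1 k.2
  set g0 : ↥(K α) →ₗ[F] ↥I :=
    LinearMap.codRestrict I (φ ∘ₗ (K α).subtype) hgmem with hg0
  have hg0ker : ∀ k : ↥(K α), g0 k ∈ LinearMap.ker ψ := by
    intro k
    simp only [LinearMap.mem_ker, hψ, LinearMap.comp_apply, Submodule.subtype_apply]
    have : r ((g0 k : ↥I) : FreeMod F ι deg γ) = (k : FreeMod F ι deg α) := by
      simp [hg0, hr, hφ, LinearMap.codRestrict, res_free]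
    rw [this]
    simpa [Submodule.Quotient.mk_eq_zero] using k.2
  set g : ↥(K α) →ₗ[F] ↥(LinearMap.ker ψ) :=
    LinearMap.codRestrict _ g0 hg0ker with hg
  have hfmem : ∀ v : ↥(LinearMap.ker ψ), (r ∘ₗ I.subtype) v.1 ∈ K α := by
    intro v
    have := v.2
    simp only [LinearMap.mem_ker, hψ, LinearMap.comp_apply, Submodule.subtype_apply,
      Submodule.mkQ_apply, Submodule.Quotient.mk_eq_zero] at this
    exact this
  set f : ↥(LinearMap.ker ψ) →ₗ[F] ↥(K α) :=
    LinearMap.codRestrict (K α) ((r ∘ₗ I.subtype) ∘ₗ (LinearMap.ker ψ).subtype) hfmem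
      with hf
  have hgf : g ∘ₗ f = LinearMap.id := by
    apply LinearMap.ext; intro v
    have h1 : φ (r ((v : ↥I) : FreeMod F ι deg γ)) = ((v : ↥I) : FreeMod F ι deg γ) :=
      hrep _ (v : ↥I).2
    apply Subtype.ext; apply Subtype.ext
    simpa [hg, hf, hg0, LinearMap.codRestrict] using h1
  have hfg : f ∘ₗ g = LinearMap.id := by
    ext k
    simp [hf, hg, hg0, LinearMap.codRestrict, hr, hφ, res_free]
  have eker : Module.finrank F ↥(LinearMap.ker ψ) = Module.finrank F ↥(K α) :=
    (LinearEquiv.ofLinear f g hfg hgf).finrank_eq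
  -- the range of ψ is Z
  have hrange : LinearMap.range ψ = Z := by
    apply le_antisymm
    · rintro w ⟨⟨v, hv⟩, rfl⟩
      obtain ⟨⟨k1, hk1, e1⟩, ⟨k2, hk2, e2⟩⟩ := hv
      refine Submodule.mem_inf.mpr ⟨?_, ?_⟩
      · simp only [LinearMap.mem_ker, hψ, LinearMap.comp_apply, Submodule.subtype_apply,
          Submodule.mkQ_apply, Submodule.mapQ_apply, Submodule.Quotient.mk_eq_zero]
        have : freeMap F ι deg β1 γ (add_e1_le α)
            (freeMap F ι deg α β1 (le_add_e1 α) (r v)) = freeMap F ι deg β1 γ (add_e1_le α) k1 := by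
          rw [free_comp, e1]
          exact hrep v ⟨⟨k1, hk1, e1⟩, ⟨k2, hk2, e2⟩⟩
        have := free_inj (add_e1_le α) this
        rw [this]; exact hk1
      · simp only [LinearMap.mem_ker, hψ, LinearMap.comp_apply, Submodule.subtype_apply,
          Submodule.mkQ_apply, Submodule.mapQ_apply, Submodule.Quotient.mk_eq_zero]
        have : freeMap F ι deg β2 γ (add_e2_le α)
            (freeMap F ι deg α β2 (le_add_e2 α) (r v)) = freeMap F ι deg β2 γ (add_e2_le α) k2 := by
          rw [free_comp, e2]
          exact hrep v ⟨⟨k1, hk1, e1⟩, ⟨k2, hk2, e2⟩⟩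
        have := free_inj (add_e2_le α) this
        rw [this]; exact hk2
    · intro w hw
      obtain ⟨x, rfl⟩ := Submodule.mkQ_surjective (K α) w
      obtain ⟨hw1, hw2⟩ := Submodule.mem_inf.mp hw
      simp only [LinearMap.mem_ker, Submodule.mkQ_apply, Submodule.mapQ_apply,
        Submodule.Quotient.mk_eq_zero] at hw1 hw2
      have hvI : φ x ∈ I := Submodule.mem_inf.mpr
        ⟨⟨freeMap F ι deg α β1 (le_add_e1 α) x, hw1, free_comp _ _ x⟩,
         ⟨freeMap F ι deg α β2 (le_add_e2 α) x, hw2, free_comp _ _ x⟩⟩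
      refine ⟨⟨φ x, hvI⟩, ?_⟩
      simp [hψ, hr, hφ, res_free]
  have main := LinearMap.finrank_range_add_finrank_ker ψ
  rw [hrange, eker] at main
  exact main.symm.trans (Nat.add_comm _ _)
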